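/- Let ρ = e^{iπ/3} and Λ_ρ = ℤ + ℤρ, with Weierstrass zeta function ζ of Λ_ρ and quasi-periods η₁ = 2ζ(1/2), η₂ = 2ζ(ρ/2). Then ζ((1 + ρ)/3) = (η₁ + η₂)/3; that is, the Hecke function satisfies Z_{1/3, 1/3}(ρ) = 0, so z = (1+ρ)/3 is an extra (non-half-period) critical point of the Green function on the hexagonal torus E_ρ. -/

import Mathlib

/-!
The Weierstrass `ζ` is odd and satisfies `ζ' = -℘` off the lattice. Since `℘` is periodic,
`ζ(z + l) - ζ(z)` is constant on the (connected) complement of the lattice, and evaluating at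
`z = -l/2` gives the quasi-periodicity `ζ(z + l) = ζ(z) + 2ζ(l/2)`. For `ρ = e^{iπ/3}`
multiplication by `ρ` preserves `Λ_ρ`, so `ζ(ρz) = ρ⁻¹ζ(z)` and `η₂ = ρ⁻¹η₁`. As
`ρ² · (1+ρ)/3 = (1+ρ)/3 - 1`, quasi-periodicity along `1` gives `ζ(z₀) = ρ⁻²ζ(z₀) + η₁` for
`z₀ = (1+ρ)/3`, and with `ρ² = ρ - 1` this solves to `ζ(z₀) = (η₁ + η₂)/3`.
-/

noncomputable section

/-- The lattice point `m ω₁ + n ω₂` attached to an integer pair. -/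
def latPt (ω₁ ω₂ : ℂ) (p : ℤ × ℤ) : ℂ := p.1 * ω₁ + p.2 * ω₂

/-- Membership in the lattice `Λ = ℤω₁ + ℤω₂`. -/
def IsLatticePt (ω₁ ω₂ z : ℂ) : Prop := ∃ m n : ℤ, z = m * ω₁ + n * ω₂

/-- The Weierstrass `℘`-function of the lattice `ℤω₁ + ℤω₂`. -/
def wp (ω₁ ω₂ : ℂ) (z : ℂ) : ℂ :=
  1 / z ^ 2 + ∑' p : {p : ℤ × ℤ // p ≠ 0},
    (1 / (z - latPt ω₁ ω₂ p.1) ^ 2 - 1 / (latPt ω₁ ω₂ p.1) ^ 2)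

/-- The Weierstrass `ζ`-function of the lattice `ℤω₁ + ℤω₂`. -/
def wzeta (ω₁ ω₂ : ℂ) (z : ℂ) : ℂ :=
  1 / z + ∑' p : {p : ℤ × ℤ // p ≠ 0},
    (1 / (z - latPt ω₁ ω₂ p.1) + 1 / latPt ω₁ ω₂ p.1 + z / (latPt ω₁ ω₂ p.1) ^ 2)

/-- The derivative `℘'` of the Weierstrass `℘`-function. -/
def wpDeriv (ω₁ ω₂ : ℂ) : ℂ → ℂ := deriv (wp ω₁ ω₂)

/-- The quasi-period `η₁(τ) = 2ζ(1/2)` of the lattice `Λ_τ = ℤ + ℤτ`. -/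
def eta1 (τ : ℂ) : ℂ := 2 * wzeta 1 τ (1 / 2)

/-- The quasi-period `η₂(τ) = 2ζ(τ/2)` of the lattice `Λ_τ = ℤ + ℤτ`. -/
def eta2 (τ : ℂ) : ℂ := 2 * wzeta 1 τ (τ / 2)

/-- The Hecke function `Z_{r,s}(τ) = ζ(r + sτ; Λ_τ) − r η₁(τ) − s η₂(τ)`. -/
def heckeZ (r s : ℝ) (τ : ℂ) : ℂ :=
  wzeta 1 τ ((r : ℂ) + (s : ℂ) * τ) - (r : ℂ) * eta1 τ - (s : ℂ) * eta2 τ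

namespace PeriodPair

open Filter

variable (L : PeriodPair)

/-- At `l = 0` this is `1 / z` (as `1 / 0 = 0`), so summing it over all of the lattice yields
the principal term of `ζ` as well. -/
def weierstrassZetaSummand (l z : ℂ) : ℂ := 1 / (z - l) + 1 / l + z / l ^ 2

def weierstrassZeta (z : ℂ) : ℂ := ∑' l : L.lattice, weierstrassZetaSummand l z

lemma weierstrassZetaSummand_eq_div {l z : ℂ} (hl : l ≠ 0) (hz : z ≠ l) :
    weierstrassZetaSummand l z = z ^ 2 / (l ^ 2 * (z - l)) := by
  have : z - l ≠ 0 := sub_ne_zero.mpr hz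
  rw [weierstrassZetaSummand]
  field_simp
  ring

lemma norm_weierstrassZetaSummand_le {r : ℝ} {l z : ℂ} (hz : ‖z‖ < r) (hl : 2 * r ≤ ‖l‖) :
    ‖weierstrassZetaSummand l z‖ ≤ 2 * r ^ 2 * ‖l‖ ^ (-3 : ℝ) := by
  have hr : 0 < r := (norm_nonneg z).trans_lt hz
  have hl0 : 0 < ‖l‖ := by linarith
  have hzl : ‖l‖ / 2 ≤ ‖z - l‖ := by
    have := norm_sub_norm_le l z
    rw [norm_sub_rev] at this
    linarith
  rw [weierstrassZetaSummand_eq_div (norm_pos_iff.mp hl0) (by rintro rfl; linarith), norm_div,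
    norm_mul, norm_pow, norm_pow, Real.rpow_neg hl0.le,
    show ‖l‖ ^ (3 : ℝ) = ‖l‖ ^ 3 by norm_cast]
  calc ‖z‖ ^ 2 / (‖l‖ ^ 2 * ‖z - l‖) ≤ r ^ 2 / (‖l‖ ^ 2 * (‖l‖ / 2)) := by
        gcongr
    _ = 2 * r ^ 2 * (‖l‖ ^ 3)⁻¹ := by field_simp

lemma hasSumLocallyUniformly_weierstrassZeta :
    HasSumLocallyUniformly (fun (l : L.lattice) ↦ weierstrassZetaSummand l) L.weierstrassZeta :=
  L.hasSumLocallyUniformly_aux (u := fun r l ↦ 2 * r ^ 2 * ‖l‖ ^ (-3 : ℝ)) _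
    (fun _ _ ↦ (ZLattice.summable_norm_rpow _ _ (by simp; norm_num)).mul_left _)
    fun r _ ↦ eventually_atTop.mpr ⟨2 * r, fun _ hR _ hz l hl ↦
      norm_weierstrassZetaSummand_le hz (hl ▸ hR)⟩

lemma hasDerivAt_weierstrassZetaSummand {l z : ℂ} (hz : z ≠ l) :
    HasDerivAt (weierstrassZetaSummand l) (-(1 / (z - l) ^ 2 - 1 / l ^ 2)) z := by
  have h : HasDerivAt (fun w ↦ 1 / (w - l) + 1 / l + w / l ^ 2)
      (-1 / (z - l) ^ 2 + 1 / l ^ 2) z := by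
    simpa only [one_div] using
      ((((hasDerivAt_id' z).sub_const l).fun_inv (sub_ne_zero.mpr hz)).add_const (1 / l)).fun_add
        ((hasDerivAt_id' z).div_const (l ^ 2))
  exact h.congr_deriv (by ring)

lemma hasDerivAt_sum_weierstrassZetaSummand (s : Finset L.lattice) {z : ℂ}
    (hz : z ∉ L.lattice) :
    HasDerivAt (fun w ↦ ∑ l ∈ s, weierstrassZetaSummand l w)
      (∑ l ∈ s, -(1 / (z - l) ^ 2 - 1 / l ^ 2)) z :=
  HasDerivAt.fun_sum fun l _ ↦ hasDerivAt_weierstrassZetaSummand (by rintro rfl; exact hz l.2)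

lemma differentiableOn_weierstrassZeta : DifferentiableOn ℂ L.weierstrassZeta L.latticeᶜ :=
  L.hasSumLocallyUniformly_weierstrassZeta.tendstoLocallyUniformlyOn.differentiableOn
    (.of_forall fun s _ hz ↦
      (L.hasDerivAt_sum_weierstrassZetaSummand s hz).differentiableAt.differentiableWithinAt)
    L.isClosed_lattice.isOpen_compl

lemma deriv_weierstrassZeta {z : ℂ} (hz : z ∉ L.lattice) :
    deriv L.weierstrassZeta z = -℘[L] z := by
  have hlim := (L.hasSumLocallyUniformly_weierstrassZeta.tendstoLocallyUniformlyOn.deriv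
    (.of_forall fun s _ hw ↦
      (L.hasDerivAt_sum_weierstrassZetaSummand s hw).differentiableAt.differentiableWithinAt)
    L.isClosed_lattice.isOpen_compl).tendsto_at hz
  exact ((L.hasSum_weierstrassP z).neg.unique
    (hlim.congr fun s ↦ (L.hasDerivAt_sum_weierstrassZetaSummand s hz).deriv)).symm

lemma hasDerivAt_weierstrassZeta {z : ℂ} (hz : z ∉ L.lattice) :
    HasDerivAt L.weierstrassZeta (-℘[L] z) z :=
  L.deriv_weierstrassZeta hz ▸ (L.differentiableOn_weierstrassZeta.differentiableAt
    (L.isClosed_lattice.isOpen_compl.mem_nhds hz)).hasDerivAt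

lemma weierstrassZeta_neg (z : ℂ) : L.weierstrassZeta (-z) = -L.weierstrassZeta z := by
  rw [weierstrassZeta, ← (Equiv.neg L.lattice).tsum_eq, weierstrassZeta, ← tsum_neg]
  congr with l
  simp only [Equiv.neg_apply, NegMemClass.coe_neg, weierstrassZetaSummand,
    show ∀ a b : ℂ, -a - -b = -(a - b) from fun _ _ ↦ by ring, one_div, inv_neg, neg_sq]
  ring

lemma isPreconnected_compl_lattice : IsPreconnected (L.latticeᶜ : Set ℂ) :=
  have hcount : (L.lattice : Set ℂ).Countable :=
    Set.countable_coe_iff.mp L.latticeEquivProd.symm.surjective.countable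
  (hcount.isConnected_compl_of_one_lt_rank (by simp)).isPreconnected

lemma weierstrassZeta_add_coe {l : ℂ} (hl : l ∈ L.lattice) (hl2 : l / 2 ∉ L.lattice) {z : ℂ}
    (hz : z ∉ L.lattice) :
    L.weierstrassZeta (z + l) = L.weierstrassZeta z + 2 * L.weierstrassZeta (l / 2) := by
  have hderiv : ∀ w ∉ L.lattice,
      HasDerivAt (fun w ↦ L.weierstrassZeta (w + l) - L.weierstrassZeta w) 0 w := fun w hw ↦ by
    have hwl : w + l ∉ L.lattice := fun h ↦ hw (by simpa using sub_mem h hl)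
    simpa [L.weierstrassP_add_coe w ⟨l, hl⟩] using
      ((L.hasDerivAt_weierstrassZeta hwl).comp_add_const w l).fun_sub
        (L.hasDerivAt_weierstrassZeta hw)
  have hhalf : -(l / 2) ∉ L.lattice := fun h ↦ hl2 (by simpa using neg_mem h)
  have hconst := L.isClosed_lattice.isOpen_compl.is_const_of_deriv_eq_zero
    L.isPreconnected_compl_lattice
    (fun w hw ↦ (hderiv w hw).differentiableAt.differentiableWithinAt)
    (fun w hw ↦ (hderiv w hw).deriv) hz hhalf
  rw [neg_add_eq_sub, sub_half, weierstrassZeta_neg] at hconst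
  linear_combination hconst

lemma weierstrassZetaSummand_mul {u : ℂ} (hu : u ≠ 0) (l z : ℂ) :
    weierstrassZetaSummand (u * l) (u * z) = u⁻¹ * weierstrassZetaSummand l z := by
  simp only [weierstrassZetaSummand, ← mul_sub, mul_inv, mul_pow, div_eq_mul_inv]
  field_simp

lemma weierstrassZeta_mul {u : ℂ} (hu : u ≠ 0)
    (hL : ∀ x, u * x ∈ L.lattice ↔ x ∈ L.lattice) (z : ℂ) :
    L.weierstrassZeta (u * z) = u⁻¹ * L.weierstrassZeta z := by
  let e : L.lattice ≃ L.lattice :=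
    { toFun l := ⟨u * l, (hL l).2 l.2⟩
      invFun l := ⟨u⁻¹ * l, (hL _).1 (by simp [hu])⟩
      left_inv l := by ext; simp [hu]
      right_inv l := by ext; simp [hu] }
  rw [weierstrassZeta, ← e.tsum_eq, weierstrassZeta, ← tsum_mul_left]
  exact tsum_congr fun l ↦ weierstrassZetaSummand_mul hu l z

lemma wzeta_eq_weierstrassZeta : wzeta L.ω₁ L.ω₂ = L.weierstrassZeta := by
  ext z
  have he : ∀ p, (L.latticeEquivProd.symm p : ℂ) = latPt L.ω₁ L.ω₂ p := fun p ↦ by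
    simp [latticeEquiv_symm_apply, latPt]
  have hs : Summable fun p : ℤ × ℤ ↦ weierstrassZetaSummand (latPt L.ω₁ L.ω₂ p) z := by
    simpa only [LinearEquiv.coe_toEquiv, Function.comp_def, he] using
      L.latticeEquivProd.symm.toEquiv.summable_iff.mpr
        (L.hasSumLocallyUniformly_weierstrassZeta.hasSum (x := z)).summable
  rw [weierstrassZeta, ← L.latticeEquivProd.symm.toEquiv.tsum_eq]
  simp only [LinearEquiv.coe_toEquiv, he]
  rw [← hs.tsum_subtype_add_tsum_subtype_compl {0},
    tsum_singleton (0 : ℤ × ℤ) fun p ↦ weierstrassZetaSummand (latPt L.ω₁ L.ω₂ p) z, wzeta]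
  congr 1
  simp [weierstrassZetaSummand, latPt]

lemma linearIndependent_one_of_im_ne_zero {τ : ℂ} (hτ : τ.im ≠ 0) :
    LinearIndependent ℝ ![1, τ] := by
  refine LinearIndependent.pair_iff.mpr fun s t h ↦ ?_
  have ht : t = 0 := by simpa [hτ] using congrArg Complex.im h
  subst ht
  simpa using h

def ofTau (τ : ℂ) (hτ : τ.im ≠ 0) : PeriodPair :=
  ⟨1, τ, linearIndependent_one_of_im_ne_zero hτ⟩

lemma mul_mem_lattice_ofTau_iff {ρ : ℂ} (hρim : ρ.im ≠ 0) (hρ : ρ ^ 2 = ρ - 1) (x : ℂ) :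
    ρ * x ∈ (ofTau ρ hρim).lattice ↔ x ∈ (ofTau ρ hρim).lattice := by
  have hmul : ∀ y ∈ (ofTau ρ hρim).lattice, ρ * y ∈ (ofTau ρ hρim).lattice := by
    intro y hy
    obtain ⟨m, n, rfl⟩ := mem_lattice.mp hy
    refine mem_lattice.mpr ⟨-n, m + n, ?_⟩
    simp only [ofTau]
    push_cast
    linear_combination (-n : ℂ) * hρ
  refine ⟨fun h ↦ ?_, hmul x⟩
  have hcube : ρ * (ρ * (ρ * x)) = -x := by linear_combination (x * (ρ + 1)) * hρ
  simpa [hcube] using hmul _ (hmul _ h)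

end PeriodPair

open PeriodPair

lemma Complex.im_ne_zero_of_sq_eq_sub_one {ρ : ℂ} (hρ : ρ ^ 2 = ρ - 1) : ρ.im ≠ 0 := by
  intro him
  have h := congrArg Complex.re hρ
  simp only [sq, Complex.mul_re, him, mul_zero, sub_zero, Complex.sub_re, Complex.one_re] at h
  nlinarith [sq_nonneg (ρ.re - 1 / 2)]

lemma Complex.exp_pi_mul_I_div_three_sq :
    Complex.exp (Real.pi * Complex.I / 3) ^ 2 = Complex.exp (Real.pi * Complex.I / 3) - 1 := by
  have hexp :
      Complex.exp (Real.pi * Complex.I / 3) = 1 / 2 + (Real.sqrt 3 / 2 : ℝ) * Complex.I := by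
    rw [show (Real.pi : ℂ) * Complex.I / 3 = (Real.pi / 3 : ℝ) * Complex.I by push_cast; ring,
      Complex.exp_mul_I, ← Complex.ofReal_cos, ← Complex.ofReal_sin, Real.cos_pi_div_three,
      Real.sin_pi_div_three]
    push_cast
    ring
  have hsqrt : ((Real.sqrt 3 : ℝ) : ℂ) ^ 2 = 3 := by
    rw [← Complex.ofReal_pow, Real.sq_sqrt (by norm_num)]
    norm_num
  rw [hexp]
  push_cast
  linear_combination (Complex.I ^ 2 / 4) * hsqrt + (3 / 4) * Complex.I_sq

theorem wzeta_one_add_div_three_of_sq_eq_sub_one {ρ : ℂ} (hρ : ρ ^ 2 = ρ - 1) :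
    wzeta 1 ρ ((1 + ρ) / 3) = (eta1 ρ + eta2 ρ) / 3 := by
  set L := ofTau ρ (Complex.im_ne_zero_of_sq_eq_sub_one hρ)
  have hζ : wzeta 1 ρ = L.weierstrassZeta := L.wzeta_eq_weierstrassZeta
  have hω₁ : L.ω₁ = 1 := rfl
  have hρ0 : ρ ≠ 0 := by rintro rfl; norm_num at hρ
  have hinv : ρ⁻¹ = 1 - ρ := inv_eq_of_mul_eq_one_right (by linear_combination -hρ)
  have hrot := L.weierstrassZeta_mul hρ0 (mul_mem_lattice_ofTau_iff _ hρ)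
  have hz₀ : ((1 / 3 : ℚ) : ℂ) * L.ω₁ + ((1 / 3 : ℚ) : ℂ) * L.ω₂ ∉ L.lattice :=
    mul_ω₁_add_mul_ω₂_mem_lattice.not.mpr (by norm_num)
  have hz : (1 + ρ) / 3 - 1 ∉ L.lattice := fun h ↦ hz₀ <| by
    convert add_mem h L.ω₁_mem_lattice using 1
    simp only [L, ofTau]
    push_cast
    ring
  have hquasi := L.weierstrassZeta_add_coe L.ω₁_mem_lattice L.ω₁_div_two_notMem_lattice hz
  rw [hω₁, sub_add_cancel, show (1 + ρ) / 3 - 1 = ρ * (ρ * ((1 + ρ) / 3)) by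
    linear_combination (-(ρ + 2) / 3) * hρ, hrot, hrot, hinv] at hquasi
  have heta2 : eta2 ρ = (1 - ρ) * eta1 ρ := by
    rw [eta1, eta2, hζ, show ρ / 2 = ρ * (1 / 2) by ring, hrot, hinv]
    ring
  rw [heta2, eta1, hζ]
  linear_combination (2 - ρ) / 3 * hquasi + L.weierstrassZeta ((1 + ρ) / 3) * (3 - ρ) / 3 * hρ

lemma heckeZ_one_third_one_third (τ : ℂ) :
    heckeZ (1 / 3) (1 / 3) τ = wzeta 1 τ ((1 + τ) / 3) - (eta1 τ + eta2 τ) / 3 := by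
  rw [heckeZ, show ((1 / 3 : ℝ) : ℂ) + ((1 / 3 : ℝ) : ℂ) * τ = (1 + τ) / 3 by push_cast; ring]
  push_cast
  ring

theorem stmt11 (ρ : ℂ) (hρ : ρ = Complex.exp (Real.pi * Complex.I / 3)) :
    wzeta 1 ρ ((1 + ρ) / 3) = (eta1 ρ + eta2 ρ) / 3 ∧
    heckeZ (1 / 3) (1 / 3) ρ = 0 := by
  have hzeta := wzeta_one_add_div_three_of_sq_eq_sub_one (hρ ▸ Complex.exp_pi_mul_I_div_three_sq)
  exact ⟨hzeta, by rw [heckeZ_one_third_one_third, hzeta, sub_self]⟩
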